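/- Let G = (V,E) be a finite graph, and construct the graphical game where each node v is a player with actions {a_0, a_1}; an isolated node gets payoff -1 for a_0 and -2 for a_1; a non-isolated node v gets payoff equal to the number of neighbors v' of v such that both v and v' play a_1. Then every graph automorphism of G is a player symmetry of this game, and conversely every game symmetry of this game induces a player permutation that is a graph automorphism of G. -/
import Mathlib


/-- Payoff of player `v` in the graphical game built from graph `G`: actions are `Bool`
(`false = a₀`, `true = a₁`); an isolated node gets `-1` for `a₀` and `-2` for `a₁`; a
non-isolated node gets the number of its neighbors `v'` such that both `v` and `v'` play
`a₁`. -/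
def graphicalPayoff {V : Type*} [Fintype V] [DecidableEq V]
    (G : SimpleGraph V) [DecidableRel G.Adj] (v : V) (a : V → Bool) : ℝ :=
  if ∀ w, ¬ G.Adj v w then (if a v then -2 else -1)
  else ((G.neighborFinset v).filter (fun w => a v ∧ a w)).card

section Aux

variable {V : Type*} [Fintype V] [DecidableEq V] (G : SimpleGraph V) [DecidableRel G.Adj]

lemma gp_card {v : V} (h : ¬ ∀ w, ¬ G.Adj v w) (a : V → Bool) :
    graphicalPayoff G v a
      = (((G.neighborFinset v).filter (fun w => a v ∧ a w)).card : ℝ) := by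
  simp only [graphicalPayoff, if_neg h]

lemma gp_iso {v : V} (h : ∀ w, ¬ G.Adj v w) (a : V → Bool) :
    graphicalPayoff G v a = if a v then -2 else -1 := by
  simp only [graphicalPayoff, if_pos h]

end Aux

/-- Every graph automorphism of `G` is a player symmetry of the graphical game built from `G`,
and conversely every game symmetry of this game (given by a player permutation `π` together
with action bijections `f v` for each player) induces a player permutation `π` that is a graph
automorphism of `G`. -/
theorem stmt_16 {V : Type*} [Fintype V] [DecidableEq V]
    (G : SimpleGraph V) [DecidableRel G.Adj] :
    (∀ ψ : G ≃g G, ∀ (v : V) (a : V → Bool),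
      graphicalPayoff G v a = graphicalPayoff G (ψ v) (fun w => a (ψ.symm w))) ∧
    (∀ (π : Equiv.Perm V) (f : V → (Bool ≃ Bool)),
      (∀ (v : V) (a : V → Bool),
        graphicalPayoff G v a =
          graphicalPayoff G (π v) (fun w => f (π.symm w) (a (π.symm w)))) →
      ∀ v w : V, G.Adj v w ↔ G.Adj (π v) (π w)) := by
  constructor
  · -- automorphisms are player symmetries
    intro ψ v a
    by_cases h : ∀ w, ¬ G.Adj v w
    · have h' : ∀ w, ¬ G.Adj (ψ v) w := by
        intro w hw
        have : G.Adj v (ψ.symm w) := by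
          have := ψ.symm.map_adj_iff.mpr hw
          simpa using this
        exact h _ this
      rw [gp_iso G h, gp_iso G h']
      simp
    · have h' : ¬ ∀ w, ¬ G.Adj (ψ v) w := by
        push_neg at h ⊢
        obtain ⟨w, hw⟩ := h
        exact ⟨ψ w, ψ.map_adj_iff.mpr hw⟩
      rw [gp_card G h, gp_card G h']
      congr 1
      apply Finset.card_bij (fun w _ => ψ w)
      · intro u hu
        simp only [Finset.mem_filter, SimpleGraph.mem_neighborFinset] at hu ⊢
        refine ⟨ψ.map_adj_iff.mpr hu.1, ?_⟩
        simpa using hu.2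
      · intro u₁ h₁ u₂ h₂ h
        exact ψ.injective h
      · intro u hu
        simp only [Finset.mem_filter, SimpleGraph.mem_neighborFinset] at hu
        refine ⟨ψ.symm u, ?_, by simp⟩
        simp only [Finset.mem_filter, SimpleGraph.mem_neighborFinset]
        constructor
        · have := ψ.symm.map_adj_iff.mpr hu.1
          simpa using this
        · simpa using hu.2
  · -- game symmetries induce graph automorphisms
    intro π f hpf
    -- isolated nodes are mapped to isolated nodes
    have h1 : ∀ v, (∀ w, ¬ G.Adj v w) → (∀ w, ¬ G.Adj (π v) w) := by
      intro v hv
      by_contra h'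
      have key := hpf v (fun _ => false)
      rw [gp_iso G hv, gp_card G h'] at key
      have h0 : (0:ℝ) ≤ (((G.neighborFinset (π v)).filter
          (fun w => (fun _ => (f (π.symm (π v)))
            ((fun _ : V => false) (π.symm (π v)))) w ∧
            (f (π.symm w)) false)).card : ℝ) := Nat.cast_nonneg _
      simp only [Bool.false_eq_true, if_false] at key
      rw [← key] at h0
      linarith
    -- non-isolated nodes are mapped to non-isolated nodes
    have h2 : ∀ v, ¬(∀ w, ¬ G.Adj v w) → ¬(∀ w, ¬ G.Adj (π v) w) := by
      intro v hv hpv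
      have key := hpf v (fun _ => false)
      rw [gp_card G hv, gp_iso G hpv] at key
      have h0 : (0:ℝ) ≤ (((G.neighborFinset v).filter
          (fun w => (fun _ : V => false) v ∧ (fun _ : V => false) w)).card : ℝ) :=
        Nat.cast_nonneg _
      rw [key] at h0
      split_ifs at h0 <;> linarith
    -- the neighbor fact : for non-isolated v₀, every neighbor u of π v₀ has
    -- f (π.symm u) false = false
    have hnb : ∀ v₀, ¬(∀ w, ¬ G.Adj v₀ w) →
        ∀ u, G.Adj (π v₀) u → f (π.symm u) false = false := by
      intro v₀ hv₀ u hu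
      set t : Bool := (f v₀).symm true with ht
      set a : V → Bool := fun x => if x = v₀ then t else false with ha
      have key := hpf v₀ a
      rw [gp_card G hv₀, gp_card G (h2 v₀ hv₀)] at key
      have hLHS : ((G.neighborFinset v₀).filter (fun w => a v₀ ∧ a w)) = ∅ := by
        apply Finset.filter_false_of_mem
        intro x hx
        rw [SimpleGraph.mem_neighborFinset] at hx
        have hxne : x ≠ v₀ := fun h => G.irrefl (h ▸ hx)
        simp [ha, hxne]
      rw [hLHS] at key
      simp only [Finset.card_empty, Nat.cast_zero] at key
      have hcard0 : ((G.neighborFinset (π v₀)).filter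
          (fun w => (f (π.symm (π v₀))) (a (π.symm (π v₀))) ∧
            (f (π.symm w)) (a (π.symm w)))).card = 0 := by
        have := key.symm
        exact_mod_cast this
      rw [Finset.card_eq_zero] at hcard0
      have hmem : u ∉ (G.neighborFinset (π v₀)).filter
          (fun w => (f (π.symm (π v₀))) (a (π.symm (π v₀))) ∧
            (f (π.symm w)) (a (π.symm w))) := by
        rw [hcard0]; exact Finset.notMem_empty u
      rw [Finset.mem_filter, SimpleGraph.mem_neighborFinset] at hmem
      push_neg at hmem
      have hpre : (f (π.symm (π v₀))) (a (π.symm (π v₀))) = true := by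
        simp only [Equiv.symm_apply_apply, ha, if_pos rfl, ht]
        exact (f v₀).apply_symm_apply true
      have hbu := hmem hu
      rw [hpre] at hbu
      simp only [true_and] at hbu
      have hune : π.symm u ≠ v₀ := by
        intro h
        have : u = π v₀ := by rw [← h, Equiv.apply_symm_apply]
        exact G.irrefl (this ▸ hu)
      have hau : a (π.symm u) = false := by simp [ha, hune]
      rw [hau] at hbu
      simpa using hbu
    -- f v false = false for every non-isolated v
    have hffalse : ∀ v, ¬(∀ w, ¬ G.Adj v w) → f v false = false := by
      intro v hv
      have hπv := h2 v hv
      push_neg at hπv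
      obtain ⟨y, hy⟩ := hπv
      -- y is non-isolated, so π.symm y is non-isolated
      have hy' : ¬(∀ w, ¬ G.Adj (π.symm y) w) := by
        intro hiso
        have := h1 _ hiso
        rw [Equiv.apply_symm_apply] at this
        exact this (π v) hy.symm
      have := hnb (π.symm y) hy' (π v) (by rw [Equiv.apply_symm_apply]; exact hy.symm)
      rwa [Equiv.symm_apply_apply] at this
    -- hence f v true = true for every non-isolated v
    have hftrue : ∀ v, ¬(∀ w, ¬ G.Adj v w) → f v true = true := by
      intro v hv
      cases h : f v true with
      | true => rfl
      | false =>
        have := (f v).injective (h.trans (hffalse v hv).symm)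
        exact absurd this (by simp)
    -- the main adjacency argument
    intro v w
    by_cases hv : ∀ u, ¬ G.Adj v u
    · constructor
      · intro h; exact absurd h (hv w)
      · intro h; exact absurd h (h1 v hv (π w))
    by_cases hw : ∀ u, ¬ G.Adj w u
    · constructor
      · intro h; exact absurd h.symm (hw v)
      · intro h; exact absurd h.symm (h1 w hw (π v))
    -- both v and w are non-isolated
    set a : V → Bool := fun u => decide (u = v ∨ u = w) with ha
    have key := hpf v a
    rw [gp_card G hv, gp_card G (h2 v hv)] at key
    have hav : a v = true := by simp [ha]
    have hLHS : ((G.neighborFinset v).filter (fun u => a v ∧ a u))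
        = (G.neighborFinset v).filter (fun u => u = w) := by
      apply Finset.filter_congr
      intro u hu
      rw [SimpleGraph.mem_neighborFinset] at hu
      have hune : u ≠ v := fun h => G.irrefl (h ▸ hu)
      simp [ha, hav, hune]
    have hRHS : ((G.neighborFinset (π v)).filter
          (fun u => (f (π.symm (π v))) (a (π.symm (π v))) ∧ (f (π.symm u)) (a (π.symm u))))
        = (G.neighborFinset (π v)).filter (fun u => u = π w) := by
      apply Finset.filter_congr
      intro u hu
      rw [SimpleGraph.mem_neighborFinset] at hu
      have hune : u ≠ π v := fun h => G.irrefl (h ▸ hu)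
      have hpre : (f (π.symm (π v))) (a (π.symm (π v))) = true := by
        rw [Equiv.symm_apply_apply, hav]; exact hftrue v hv
      rw [hpre]
      simp only [true_and]
      constructor
      · intro hb
        -- b u = true forces u = π w
        by_contra hne
        have h1' : π.symm u ≠ v := fun h => hune (by rw [← h, Equiv.apply_symm_apply])
        have h2' : π.symm u ≠ w := fun h => hne (by rw [← h, Equiv.apply_symm_apply])
        have hau : a (π.symm u) = false := by simp [ha, h1', h2']
        rw [hau] at hb
        -- π.symm u is non-isolated since u is adjacent to π v
        have huni : ¬(∀ x, ¬ G.Adj (π.symm u) x) := by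
          intro hiso
          have := h1 _ hiso
          rw [Equiv.apply_symm_apply] at this
          exact this (π v) hu.symm
        rw [hffalse _ huni] at hb
        exact absurd hb (by simp)
      · intro hb
        subst hb
        have hsw : π.symm (π w) = w := Equiv.symm_apply_apply π w
        have haw : a (π.symm (π w)) = true := by
          rw [hsw]; simp [ha]
        rw [haw, hsw]
        exact hftrue w hw
    rw [hLHS, hRHS, Finset.filter_eq', Finset.filter_eq'] at key
    have key' : (if w ∈ G.neighborFinset v then ({w} : Finset V) else ∅).card
        = (if π w ∈ G.neighborFinset (π v) then ({π w} : Finset V) else ∅).card := by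
      exact_mod_cast key
    rw [apply_ite Finset.card, apply_ite Finset.card] at key'
    simp only [Finset.card_singleton, Finset.card_empty] at key'
    rw [← SimpleGraph.mem_neighborFinset, ← SimpleGraph.mem_neighborFinset]
    by_cases hm1 : w ∈ G.neighborFinset v <;>
      by_cases hm2 : π w ∈ G.neighborFinset (π v) <;>
      simp [hm1, hm2] at key' ⊢
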